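/- arXiv:1605.02124 — 4 statements merged into one kernel-verified Lean document; each statement's English description precedes it below -/
import Mathlib

section
/- If G is a connected graph of order n ≥ 2 with forcing number F(G) = 1, then G is isomorphic to the path P_n. Conversely, F(P_n) = 1. -/
open SimpleGraph

variable {V : Type*}

/-- One step of the (zero) forcing process: a colored vertex with exactly one
uncolored neighbor forces that neighbor to become colored. -/
def zfStep (G : SimpleGraph V) (S : Set V) : Set V :=
  S ∪ {w | ∃ v ∈ S, G.neighborSet v \ S = {w}}

/-- `S` is a forcing set if iterating the forcing process colors all vertices. -/
def IsForcingSet (G : SimpleGraph V) (S : Set V) : Prop :=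
  ∃ n : ℕ, (zfStep G)^[n] S = Set.univ

/-- A connected forcing set: a forcing set inducing a connected subgraph. -/
def IsConnForcingSet (G : SimpleGraph V) (S : Set V) : Prop :=
  IsForcingSet G S ∧ (G.induce S).Connected

/-- The forcing number `F(G)`. -/
noncomputable def forcingNumber (G : SimpleGraph V) : ℕ :=
  sInf (Set.ncard '' {S : Set V | IsForcingSet G S})

/-- The connected forcing number `F_c(G)`. -/
noncomputable def connForcingNumber (G : SimpleGraph V) : ℕ :=
  sInf (Set.ncard '' {S : Set V | IsConnForcingSet G S})

/-!
Starting from a single colored vertex `v`, every stage of the forcing process colors at most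
one new vertex, and the colored vertices `f 0 = v, f 1, …, f k` induce a path in which every
vertex but the last already has all its neighbors colored: a new vertex can only be forced by
`f k`, and if it is forced it is its unique uncolored neighbor, which becomes `f (k + 1)`. When
the process colors everything, this path is all of `G`. Conversely, in `P_n` an end vertex
forces the whole path.
-/

section ForcingProcess

variable {G : SimpleGraph V}

lemma subset_zfStep (G : SimpleGraph V) (S : Set V) : S ⊆ zfStep G S :=
  Set.subset_union_left

lemma iterate_zfStep_mono (G : SimpleGraph V) (S : Set V) :
    Monotone fun k => (zfStep G)^[k] S :=
  fun _ _ hkm => Function.monotone_iterate_of_id_le (subset_zfStep G) hkm S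

lemma not_isForcingSet_empty [Nonempty V] (G : SimpleGraph V) : ¬IsForcingSet G ∅ := by
  rintro ⟨k, hk⟩
  have hfix : zfStep G ∅ = ∅ := by simp [zfStep]
  exact Set.empty_ne_univ (Function.iterate_fixed hfix k ▸ hk)

/-- Once the process stalls it stays put forever. -/
lemma IsForcingSet.iterate_succ_ne {S : Set V} (hS : IsForcingSet G S) {j : ℕ}
    (hj : (zfStep G)^[j] S ≠ Set.univ) :
    (zfStep G)^[j + 1] S ≠ (zfStep G)^[j] S := by
  intro hfix
  rw [Function.iterate_succ_apply'] at hfix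
  obtain ⟨m, hm⟩ := hS
  rcases le_or_gt m j with hmj | hjm
  · exact hj (Set.eq_univ_of_univ_subset (hm ▸ iterate_zfStep_mono G S hmj))
  · obtain ⟨d, rfl⟩ := Nat.exists_eq_add_of_le hjm.le
    rw [add_comm, Function.iterate_add_apply, Function.iterate_fixed hfix] at hm
    exact hj hm

lemma neighborSet_diff_eq_of_mem_zfStep {S : Set V} {a y : V}
    (hS : ∀ x ∈ S, x ≠ a → G.neighborSet x ⊆ S) (hy : y ∈ zfStep G S) (hyS : y ∉ S) :
    G.neighborSet a \ S = {y} := by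
  obtain hy | ⟨x, hxS, hx⟩ := hy
  · exact absurd hy hyS
  obtain rfl : x = a := by
    by_contra hxa
    have : y ∈ G.neighborSet x \ S := hx ▸ rfl
    exact this.2 (hS x hxS hxa this.1)
  exact hx

lemma exists_zfStep_eq_insert {S : Set V} {a : V}
    (hS : ∀ x ∈ S, x ≠ a → G.neighborSet x ⊆ S) (hstep : zfStep G S ≠ S) :
    ∃ u, G.neighborSet a \ S = {u} ∧ zfStep G S = insert u S := by
  obtain ⟨u, hu, huS⟩ := Set.exists_of_ssubset ((subset_zfStep G S).ssubset_of_ne hstep.symm)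
  have hau := neighborSet_diff_eq_of_mem_zfStep hS hu huS
  refine ⟨u, hau, Set.Subset.antisymm (fun y hy => ?_) (Set.insert_subset hu (subset_zfStep G S))⟩
  by_cases hyS : y ∈ S
  · exact Or.inr hyS
  · rw [neighborSet_diff_eq_of_mem_zfStep hS hy hyS, Set.singleton_eq_singleton_iff] at hau
    exact Or.inl hau

end ForcingProcess

section Iso

variable {W : Type*} {G : SimpleGraph V} {G' : SimpleGraph W}

lemma zfStep_preimage (e : G ≃g G') (T : Set W) :
    zfStep G (e ⁻¹' T) = e ⁻¹' zfStep G' T := by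
  have hN : ∀ v w, G.neighborSet v \ e ⁻¹' T = {w} ↔ G'.neighborSet (e v) \ T = {e w} := by
    intro v w
    have : G.neighborSet v \ e ⁻¹' T = e.toEquiv ⁻¹' (G'.neighborSet (e v) \ T) := by
      ext x; simp [e.map_adj_iff]
    rw [this, Equiv.preimage_eq_iff_eq_image, Set.image_singleton]
    rfl
  ext w
  simp only [zfStep, Set.mem_union, Set.mem_preimage, Set.mem_ofPred_eq, hN]
  refine or_congr_right ⟨fun ⟨v, hv, h⟩ => ⟨e v, hv, h⟩, fun ⟨v', hv', h⟩ => ?_⟩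
  exact ⟨e.symm v', by simpa using hv', by simpa using h⟩

lemma IsForcingSet.preimage {T : Set W} (hT : IsForcingSet G' T) (e : G ≃g G') :
    IsForcingSet G (e ⁻¹' T) := by
  obtain ⟨k, hk⟩ := hT
  refine ⟨k, ?_⟩
  have hcomm : Function.Semiconj (e ⁻¹' ·) (zfStep G') (zfStep G) :=
    fun T => (zfStep_preimage e T).symm
  rw [← hcomm.iterate_right k T, hk]
  rfl

end Iso

lemma zfStep_pathGraph (n k : ℕ) :
    zfStep (pathGraph n) {i | (i : ℕ) ≤ k} = {i : Fin n | (i : ℕ) ≤ k + 1} := by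
  ext x
  simp only [zfStep, Set.mem_union, Set.mem_ofPred_eq]
  constructor
  · rintro (hx | ⟨v, hv, hvx⟩)
    · omega
    · have hx : x ∈ (pathGraph n).neighborSet v \ {i | (i : ℕ) ≤ k} := hvx ▸ rfl
      simp only [Set.mem_sdiff, mem_neighborSet, pathGraph_adj, Set.mem_ofPred_eq] at hx
      omega
  · intro hx
    by_cases hxk : (x : ℕ) ≤ k
    · exact Or.inl hxk
    · refine Or.inr ⟨⟨k, by omega⟩, le_rfl, ?_⟩
      ext y
      simp only [Set.mem_sdiff, mem_neighborSet, pathGraph_adj, Set.mem_ofPred_eq,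
        Set.mem_singleton_iff, Fin.ext_iff]
      omega

lemma isForcingSet_pathGraph_zero (m : ℕ) : IsForcingSet (pathGraph (m + 1)) {0} := by
  have hiter : ∀ k, (zfStep (pathGraph (m + 1)))^[k] {0} = {i : Fin (m + 1) | (i : ℕ) ≤ k} := by
    intro k
    induction k with
    | zero =>
      ext i
      rw [Function.iterate_zero, id, Set.mem_singleton_iff, Set.mem_ofPred_eq, Nat.le_zero,
        Fin.val_eq_zero_iff]
    | succ k ih => rw [Function.iterate_succ_apply', ih, zfStep_pathGraph]
  refine ⟨m, ?_⟩
  rw [hiter, Set.eq_univ_iff_forall]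
  exact fun i => Nat.lt_succ_iff.mp i.isLt

structure IsForcingChain (G : SimpleGraph V) (v : V) (k : ℕ) (f : ℕ → V) : Prop where
  injOn : Set.InjOn f (Set.Iic k)
  iterate_eq : (zfStep G)^[k] {v} = f '' Set.Iic k
  adj_iff : ∀ i ≤ k, ∀ j ≤ k, G.Adj (f i) (f j) ↔ i + 1 = j ∨ j + 1 = i
  neighborSet_subset : ∀ i < k, G.neighborSet (f i) ⊆ f '' Set.Iic k

namespace IsForcingChain

variable {G : SimpleGraph V} {v : V} {k : ℕ} {f : ℕ → V}

lemma zero (G : SimpleGraph V) (v : V) : IsForcingChain G v 0 fun _ => v where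
  injOn := fun i hi j hj _ => (Nat.le_zero.mp hi).trans (Nat.le_zero.mp hj).symm
  iterate_eq := by simp
  adj_iff := fun i hi j hj => by simp only [G.irrefl, false_iff]; omega
  neighborSet_subset := fun i hi => absurd hi (Nat.not_lt_zero i)

lemma succ (hc : IsForcingChain G v k f)
    (hstep : (zfStep G)^[k + 1] {v} ≠ (zfStep G)^[k] {v}) :
    ∃ u, IsForcingChain G v (k + 1) (Function.update f (k + 1) u) := by
  obtain ⟨hinj, hiter, hadj, hnbr⟩ := hc
  set S := f '' Set.Iic k
  have hS : ∀ x ∈ S, x ≠ f k → G.neighborSet x ⊆ S := by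
    rintro _ ⟨i, hi, rfl⟩ hik
    exact hnbr i (lt_of_le_of_ne hi (by rintro rfl; exact hik rfl))
  rw [Function.iterate_succ_apply', hiter] at hstep
  obtain ⟨u, hku, hstepu⟩ := exists_zfStep_eq_insert hS hstep
  obtain ⟨hadj_ku, huS⟩ : u ∈ G.neighborSet (f k) \ S := hku ▸ rfl
  have hadj_u : ∀ i ≤ k, G.Adj (f i) u ↔ i = k := by
    refine fun i hi => ⟨fun h => ?_, fun h => h ▸ hadj_ku⟩
    by_contra hik
    exact huS (hnbr i (lt_of_le_of_ne hi hik) h)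
  refine ⟨u, ?_⟩
  set f' := Function.update f (k + 1) u
  have hf' : Set.EqOn f' f (Set.Iic k) :=
    fun i hi => Function.update_of_ne (by rw [Set.mem_Iic] at hi; omega) _ _
  have hf'_succ : f' (k + 1) = u := Function.update_self _ _ _
  have hIic : Set.Iic (k + 1) = insert (k + 1) (Set.Iic k) := Order.Iic_succ k
  have himage : f' '' Set.Iic (k + 1) = insert u S := by
    rw [hIic, Set.image_insert_eq, hf'.image_eq, hf'_succ]
  refine ⟨?_, ?_, fun i hi j hj => ?_, fun i hi => ?_⟩
  · rw [hIic, Set.injOn_insert (by simp), hf'.injOn_iff, hf'.image_eq, hf'_succ]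
    exact ⟨hinj, huS⟩
  · rw [Function.iterate_succ_apply', hiter, hstepu, himage]
  · rcases Nat.le_succ_iff.mp hi with hi | rfl <;> rcases Nat.le_succ_iff.mp hj with hj | rfl
    · rw [hf' hi, hf' hj]
      exact hadj i hi j hj
    · rw [hf' hi, hf'_succ, hadj_u i hi]
      omega
    · rw [hf' hj, hf'_succ, G.adj_comm, hadj_u j hj]
      omega
    · simp only [G.irrefl, false_iff]
      omega
  · rw [himage]
    rcases Nat.lt_succ_iff_lt_or_eq.mp hi with hi | rfl
    · rw [hf' hi.le]
      exact (hnbr i hi).trans (Set.subset_insert u S)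
    · rw [hf' Set.self_mem_Iic]
      intro x hx
      by_cases hxS : x ∈ S
      · exact Or.inr hxS
      · exact Or.inl (hku ▸ ⟨hx, hxS⟩ : x ∈ ({u} : Set V))

lemma nonempty_iso_pathGraph (hc : IsForcingChain G v k f)
    (huniv : (zfStep G)^[k] {v} = Set.univ) : Nonempty (G ≃g pathGraph (k + 1)) := by
  have hsurj : ∀ x, ∃ i : Fin (k + 1), f i = x := by
    intro x
    obtain ⟨i, hi, rfl⟩ : x ∈ f '' Set.Iic k := hc.iterate_eq ▸ huniv ▸ Set.mem_univ x
    exact ⟨⟨i, Nat.lt_succ_of_le hi⟩, rfl⟩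
  have hbij : Function.Bijective fun i : Fin (k + 1) => f i :=
    ⟨fun i j hij => Fin.ext (hc.injOn (Nat.le_of_lt_succ i.isLt) (Nat.le_of_lt_succ j.isLt) hij),
      hsurj⟩
  refine ⟨Iso.symm ⟨Equiv.ofBijective _ hbij, fun {i j} => ?_⟩⟩
  rw [pathGraph_adj]
  exact hc.adj_iff _ (Nat.le_of_lt_succ i.isLt) _ (Nat.le_of_lt_succ j.isLt)

end IsForcingChain

lemma exists_isForcingChain (G : SimpleGraph V) (v : V) :
    ∀ k, (∀ j < k, (zfStep G)^[j + 1] {v} ≠ (zfStep G)^[j] {v}) →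
      ∃ f, IsForcingChain G v k f
  | 0, _ => ⟨_, IsForcingChain.zero G v⟩
  | k + 1, h =>
    have ⟨_, hf⟩ := exists_isForcingChain G v k fun j hj => h j (by omega)
    have ⟨_, hu⟩ := hf.succ (h k k.lt_succ_self)
    ⟨_, hu⟩

lemma IsForcingSet.exists_iso_pathGraph {G : SimpleGraph V} {v : V} (hv : IsForcingSet G {v}) :
    ∃ k, Nonempty (G ≃g pathGraph (k + 1)) := by
  classical
  obtain ⟨f, hf⟩ :=
    exists_isForcingChain G v (Nat.find hv) fun j hj => hv.iterate_succ_ne (Nat.find_min hv hj)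
  exact ⟨_, hf.nonempty_iso_pathGraph (Nat.find_spec hv)⟩

lemma forcingNumber_eq_one_iff [Finite V] [Nonempty V] (G : SimpleGraph V) :
    forcingNumber G = 1 ↔ ∃ v, IsForcingSet G {v} := by
  constructor
  · intro h
    rw [forcingNumber] at h
    have hne : (Set.ncard '' {S | IsForcingSet G S}).Nonempty := by
      by_contra hempty
      rw [Set.not_nonempty_iff_eq_empty] at hempty
      rw [hempty, Nat.sInf_empty] at h
      exact zero_ne_one h
    obtain ⟨S, hS, hcard⟩ : 1 ∈ Set.ncard '' {S | IsForcingSet G S} := h ▸ Nat.sInf_mem hne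
    obtain ⟨v, rfl⟩ := Set.ncard_eq_one.mp hcard
    exact ⟨v, hS⟩
  · rintro ⟨v, hv⟩
    refine le_antisymm (Nat.sInf_le ⟨{v}, hv, Set.ncard_singleton v⟩) ?_
    refine le_csInf ⟨1, {v}, hv, Set.ncard_singleton v⟩ ?_
    rintro _ ⟨S, hS, rfl⟩
    refine (Set.ncard_pos S.toFinite).mpr (Set.nonempty_iff_ne_empty.mpr ?_)
    rintro rfl
    exact not_isForcingSet_empty G hS

theorem forcingNumber_eq_one_iff_path_general {V : Type*} [Fintype V]
    (G : SimpleGraph V) (n : ℕ) (hcard : Fintype.card V = n)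
    (hn : 2 ≤ n) :
    forcingNumber G = 1 ↔ Nonempty (G ≃g SimpleGraph.pathGraph n) := by
  obtain ⟨m, rfl⟩ : ∃ m, n = m + 1 := ⟨n - 1, by omega⟩
  have : Nonempty V := Fintype.card_pos_iff.mp (by omega)
  rw [forcingNumber_eq_one_iff]
  constructor
  · rintro ⟨v, hv⟩
    obtain ⟨k, ⟨e⟩⟩ := hv.exists_iso_pathGraph
    obtain rfl : m = k := by simpa [hcard] using Fintype.card_congr e.toEquiv
    exact ⟨e⟩
  · rintro ⟨e⟩
    refine ⟨e.symm 0, ?_⟩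
    convert (isForcingSet_pathGraph_zero m).preimage e
    ext x
    exact RelIso.eq_symm_apply e

/-- A connected graph of order `n ≥ 2` has forcing number `1` if and only if it is
isomorphic to the path `P_n`. -/
theorem forcingNumber_eq_one_iff_path {V : Type*} [Fintype V]
    (G : SimpleGraph V) (hG : G.Connected) (n : ℕ) (hcard : Fintype.card V = n)
    (hn : 2 ≤ n) :
    forcingNumber G = 1 ↔ Nonempty (G ≃g SimpleGraph.pathGraph n) :=
  forcingNumber_eq_one_iff_path_general G n hcard hn
end

section
/- For every integer Δ ≥ 3, there exists a connected graph G of order n with maximum degree Δ such that F_c(G) = (Δ/(Δ+1))·n + 1; explicitly, the graph obtained from the star K_{1,Δ} by subdividing every edge exactly twice and then attaching Δ−1 pendant edges to each leaf has order n = (Δ+1)² and connected forcing number n − Δ. -/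
open SimpleGraph

variable {V : Type*}

/-!
Pendant vertices of a common leaf are twins, and a vertex adjacent to one of two uncoloured
twins is adjacent to both, so it can never force either: a forcing set omits at most one pendant
per leaf. As `Δ - 1 ≥ 2`, a forcing set therefore contains a pendant of every leaf, and a
connected one contains the paths between them, i.e. every non-pendant vertex. So at most `Δ`
vertices are missing. Omitting one pendant per leaf is enough, since every leaf then forces its
last pendant.
-/

section Forcing

variable {G : SimpleGraph V}

lemma isForcingSet_of_forall_forced {S : Set V}
    (h : ∀ w ∉ S, ∃ v ∈ S, G.neighborSet v \ S = {w}) : IsForcingSet G S := by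
  refine ⟨1, Set.eq_univ_of_forall fun w => ?_⟩
  by_cases hw : w ∈ S
  · exact Or.inl hw
  · exact Or.inr (h w hw)

lemma notMem_zfStep_of_neighborSet_eq {S : Set V} {w₁ w₂ : V} (hne : w₁ ≠ w₂)
    (hN : G.neighborSet w₁ = G.neighborSet w₂) (h₁ : w₁ ∉ S) (h₂ : w₂ ∉ S) :
    w₁ ∉ zfStep G S := by
  rintro (h | ⟨v, -, hv⟩)
  · exact h₁ h
  · have hvw₁ : G.Adj v w₁ := (hv.symm ▸ Set.mem_singleton w₁ : w₁ ∈ G.neighborSet v \ S).1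
    have hvw₂ : w₂ ∈ G.neighborSet v \ S :=
      ⟨G.adj_symm (show v ∈ G.neighborSet w₂ from hN ▸ G.adj_symm hvw₁), h₂⟩
    exact hne (hv ▸ hvw₂).symm

lemma IsForcingSet.mem_or_mem_of_neighborSet_eq {S : Set V} (hS : IsForcingSet G S)
    {w₁ w₂ : V} (hne : w₁ ≠ w₂) (hN : G.neighborSet w₁ = G.neighborSet w₂) :
    w₁ ∈ S ∨ w₂ ∈ S := by
  by_contra! h
  obtain ⟨n, hn⟩ := hS
  have key : ∀ k, w₁ ∉ (zfStep G)^[k] S ∧ w₂ ∉ (zfStep G)^[k] S := by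
    intro k
    induction k with
    | zero => exact h
    | succ k ih =>
      rw [Function.iterate_succ_apply']
      exact ⟨notMem_zfStep_of_neighborSet_eq hne hN ih.1 ih.2,
        notMem_zfStep_of_neighborSet_eq hne.symm hN.symm ih.2 ih.1⟩
  exact (key n).1 (hn ▸ Set.mem_univ w₁)

lemma connForcingNumber_eq_ncard {S₀ : Set V} (h₀ : IsConnForcingSet G S₀)
    (hmin : ∀ S, IsConnForcingSet G S → S₀.ncard ≤ S.ncard) :
    connForcingNumber G = S₀.ncard :=
  le_antisymm (Nat.sInf_le ⟨S₀, h₀, rfl⟩)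
    (le_csInf ⟨_, S₀, h₀, rfl⟩ (by rintro _ ⟨S, hS, rfl⟩; exact hmin S hS))

end Forcing

section ParentGraph

variable {α : Type*} (p : α → α)

/-- The forest in which every vertex `u` is joined to its parent `p u`; roots are the fixed
points of `p`. -/
def parentGraph : SimpleGraph α := SimpleGraph.fromRel fun u v => p u = v

instance [DecidableEq α] : DecidableRel (parentGraph p).Adj :=
  inferInstanceAs (DecidableRel (SimpleGraph.fromRel _).Adj)

variable {p}

lemma parentGraph_adj {u v : α} : (parentGraph p).Adj u v ↔ u ≠ v ∧ (p u = v ∨ p v = u) :=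
  Iff.rfl

lemma parentGraph_induce_reachable_parent {S : Set α} {u : α} (hu : u ∈ S) (hpu : p u ∈ S) :
    ((parentGraph p).induce S).Reachable ⟨u, hu⟩ ⟨p u, hpu⟩ := by
  by_cases h : u = p u
  · exact (Subtype.ext h : (⟨u, hu⟩ : S) = ⟨p u, hpu⟩) ▸ .rfl
  · exact Adj.reachable (G := (parentGraph p).induce S) ⟨h, Or.inl rfl⟩

lemma parentGraph_induce_reachable_iterate {S : Set α} (hS : Set.MapsTo p S S) {u : α}
    (hu : u ∈ S) (n : ℕ) :
    ((parentGraph p).induce S).Reachable ⟨u, hu⟩ ⟨p^[n] u, hS.iterate n hu⟩ := by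
  induction n generalizing u with
  | zero => rfl
  | succ n ih => exact (parentGraph_induce_reachable_parent hu (hS hu)).trans (ih (hS hu))

lemma parentGraph_induce_connected_of_mapsTo {S : Set α} (hS : Set.MapsTo p S S) {r : α}
    (hr : r ∈ S) (hroot : ∀ u, ∃ n, p^[n] u = r) : ((parentGraph p).induce S).Connected := by
  have hreach : ∀ u : S, ((parentGraph p).induce S).Reachable u ⟨r, hr⟩ := by
    rintro ⟨u, hu⟩
    obtain ⟨n, hn⟩ := hroot u
    convert parentGraph_induce_reachable_iterate hS hu n
    exact hn.symm
  exact (connected_iff _).2 ⟨fun u v => (hreach u).trans (hreach v).symm, ⟨⟨r, hr⟩⟩⟩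

lemma parentGraph_connected {r : α} (hroot : ∀ u, ∃ n, p^[n] u = r) :
    (parentGraph p).Connected :=
  (induceUnivIso _).connected_iff.1
    (parentGraph_induce_connected_of_mapsTo (Set.mapsTo_univ p _) (Set.mem_univ r) hroot)

/-- `p c` separates the subtree rooted at `c` from the rest of the forest. -/
lemma parentGraph_exists_iterate_eq_of_adj {c u w : α} (hadj : (parentGraph p).Adj u w)
    (hu : u ≠ p c) (hw : w ≠ p c) (h : ∃ n, p^[n] u = c) : ∃ n, p^[n] w = c := by
  obtain ⟨n, hn⟩ := h
  rcases hadj.2 with rfl | rfl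
  · cases n with
    | zero => exact absurd (congrArg p hn) hw
    | succ n => exact ⟨n, hn⟩
  · exact ⟨n + 1, hn⟩

lemma parentGraph_parent_mem_of_induce_connected {S : Set α}
    (hS : ((parentGraph p).induce S).Connected) {a b c : α} (ha : a ∈ S) (hb : b ∈ S)
    (hac : ∃ n, p^[n] a = c) (hbc : ¬∃ n, p^[n] b = c) : p c ∈ S := by
  by_contra hc
  suffices key : ∀ u v : S, ((parentGraph p).induce S).Walk u v →
      (∃ n, p^[n] u.1 = c) → ∃ n, p^[n] v.1 = c from
    hbc (key ⟨a, ha⟩ ⟨b, hb⟩ (hS.preconnected _ _).some hac)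
  intro u v w
  induction w with
  | nil => exact id
  | cons h _ ih =>
    exact fun hu => ih (parentGraph_exists_iterate_eq_of_adj h
      (fun e => hc (e ▸ Subtype.prop _)) (fun e => hc (e ▸ Subtype.prop _)) hu)

end ParentGraph

/-- Vertices of the star `K_{1,Δ}` with every edge subdivided twice (by `sub₁ i`, `sub₂ i`)
and `Δ - 1` pendant vertices attached to every leaf. -/
inductive SpiderVtx (Δ : ℕ) where
  | hub : SpiderVtx Δ
  | sub₁ (i : Fin Δ) : SpiderVtx Δ
  | sub₂ (i : Fin Δ) : SpiderVtx Δ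
  | leaf (i : Fin Δ) : SpiderVtx Δ
  | pendant (i : Fin Δ) (j : Fin (Δ - 1)) : SpiderVtx Δ
  deriving DecidableEq

namespace SpiderVtx

variable {Δ : ℕ}

def equivSum (Δ : ℕ) : SpiderVtx Δ ≃ Unit ⊕ Fin Δ ⊕ Fin Δ ⊕ Fin Δ ⊕ Fin Δ × Fin (Δ - 1) where
  toFun
    | hub => .inl ()
    | sub₁ i => .inr (.inl i)
    | sub₂ i => .inr (.inr (.inl i))
    | leaf i => .inr (.inr (.inr (.inl i)))
    | pendant i j => .inr (.inr (.inr (.inr (i, j))))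
  invFun
    | .inl _ => hub
    | .inr (.inl i) => sub₁ i
    | .inr (.inr (.inl i)) => sub₂ i
    | .inr (.inr (.inr (.inl i))) => leaf i
    | .inr (.inr (.inr (.inr (i, j)))) => pendant i j
  left_inv v := by cases v <;> rfl
  right_inv s := by rcases s with _ | _ | _ | _ | ⟨i, j⟩ <;> rfl

instance : Fintype (SpiderVtx Δ) := Fintype.ofEquiv _ (equivSum Δ).symm

lemma card_eq (hΔ : 1 ≤ Δ) : Fintype.card (SpiderVtx Δ) = (Δ + 1) ^ 2 := by
  obtain ⟨d, rfl⟩ := Nat.exists_eq_add_of_le hΔ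
  simp only [Fintype.card_congr (equivSum _), Fintype.card_sum, Fintype.card_prod,
    Fintype.card_unit, Fintype.card_fin, Nat.add_sub_cancel_left]
  ring

def parent : SpiderVtx Δ → SpiderVtx Δ
  | hub => hub
  | sub₁ _ => hub
  | sub₂ i => sub₁ i
  | leaf i => sub₂ i
  | pendant i _ => leaf i

def branch : SpiderVtx Δ → Option (Fin Δ)
  | hub => none
  | sub₁ i | sub₂ i | leaf i | pendant i _ => some i

lemma iterate_parent_four (v : SpiderVtx Δ) : parent^[4] v = hub := by
  cases v <;> rfl

lemma branch_parent (v : SpiderVtx Δ) : v.parent.branch = v.branch ∨ v.parent.branch = none := by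
  cases v <;> simp [parent, branch]

lemma branch_iterate_parent (v : SpiderVtx Δ) (n : ℕ) :
    (parent^[n] v).branch = v.branch ∨ (parent^[n] v).branch = none := by
  induction n with
  | zero => exact Or.inl rfl
  | succ n ih =>
    rw [Function.iterate_succ_apply']
    rcases branch_parent (parent^[n] v) with h | h <;> rw [h] <;> tauto

lemma leaf_injective : Function.Injective (leaf (Δ := Δ)) := fun _ _ h => by injection h

lemma sub₁_injective : Function.Injective (sub₁ (Δ := Δ)) := fun _ _ h => by injection h

lemma pendant_injective (i : Fin Δ) : Function.Injective (pendant i) :=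
  fun _ _ h => by injection h

end SpiderVtx

open SpiderVtx

abbrev spider (Δ : ℕ) : SimpleGraph (SpiderVtx Δ) := parentGraph parent

section Spider

variable {Δ : ℕ}

lemma spider_connected : (spider Δ).Connected :=
  parentGraph_connected fun v => ⟨4, iterate_parent_four v⟩

lemma neighborSet_hub : (spider Δ).neighborSet hub = Set.range sub₁ := by
  ext w; cases w <;> simp [parentGraph_adj, parent]

lemma neighborSet_sub₁ (i : Fin Δ) : (spider Δ).neighborSet (sub₁ i) = {hub, sub₂ i} := by
  ext w; cases w <;> simp [parentGraph_adj, parent, eq_comm]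

lemma neighborSet_sub₂ (i : Fin Δ) : (spider Δ).neighborSet (sub₂ i) = {sub₁ i, leaf i} := by
  ext w; cases w <;> simp [parentGraph_adj, parent, eq_comm]

lemma neighborSet_leaf (i : Fin Δ) :
    (spider Δ).neighborSet (leaf i) = insert (sub₂ i) (Set.range (pendant i)) := by
  ext w; cases w <;> simp [parentGraph_adj, parent, eq_comm]

lemma neighborSet_pendant (i : Fin Δ) (j : Fin (Δ - 1)) :
    (spider Δ).neighborSet (pendant i j) = {leaf i} := by
  ext w; cases w <;> simp [parentGraph_adj, parent, eq_comm]

end Spider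

section LowerBound

variable {Δ : ℕ} {S : Set (SpiderVtx Δ)}

lemma IsForcingSet.pendant_eq_of_notMem (hS : IsForcingSet (spider Δ) S) {i : Fin Δ}
    {j j' : Fin (Δ - 1)} (hj : pendant i j ∉ S) (hj' : pendant i j' ∉ S) : j = j' := by
  by_contra hne
  refine (hS.mem_or_mem_of_neighborSet_eq (w₁ := pendant i j) (w₂ := pendant i j') ?_
    (by rw [neighborSet_pendant, neighborSet_pendant])).elim hj hj'
  exact fun h => hne (pendant_injective i h)

lemma IsForcingSet.exists_pendant_mem (hΔ : 3 ≤ Δ) (hS : IsForcingSet (spider Δ) S)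
    (i : Fin Δ) : ∃ j, pendant i j ∈ S := by
  by_contra! h
  have := hS.pendant_eq_of_notMem (h ⟨0, by omega⟩) (h ⟨1, by omega⟩)
  simp [Fin.ext_iff] at this

/-- A connected forcing set meets two branches in pendants, so it contains the path between
them, which passes through every ancestor of these pendants. -/
lemma IsConnForcingSet.iterate_parent_pendant_mem (hΔ : 3 ≤ Δ)
    (hS : IsConnForcingSet (spider Δ) S) {i : Fin Δ} {j : Fin (Δ - 1)} (hij : pendant i j ∈ S)
    {n : ℕ} (hn : n ≤ 3) : parent^[n + 1] (pendant i j) ∈ S := by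
  obtain ⟨k, hki⟩ : ∃ k : Fin Δ, k ≠ i := by
    by_cases hi : (i : ℕ) = 0
    · exact ⟨⟨1, by omega⟩, by simp [Fin.ext_iff, hi]⟩
    · exact ⟨⟨0, by omega⟩, by simp [Fin.ext_iff]; omega⟩
  obtain ⟨j', hkj'⟩ := hS.1.exists_pendant_mem hΔ k
  rw [Function.iterate_succ_apply']
  refine parentGraph_parent_mem_of_induce_connected hS.2 hij hkj' ⟨n, rfl⟩ ?_
  rintro ⟨m, hm⟩
  have hbranch : (parent^[n] (pendant i j)).branch = some i := by
    interval_cases n <;> rfl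
  rcases branch_iterate_parent (pendant k j') m with h | h <;> rw [hm, hbranch] at h
  · exact hki (Option.some_injective _ h).symm
  · exact Option.some_ne_none _ h

lemma IsConnForcingSet.mem_of_forall_ne_pendant (hΔ : 3 ≤ Δ)
    (hS : IsConnForcingSet (spider Δ) S) {v : SpiderVtx Δ} (hv : ∀ i j, v ≠ pendant i j) :
    v ∈ S := by
  choose j hj using hS.1.exists_pendant_mem hΔ
  have hmem (i : Fin Δ) (n : ℕ) (hn : n ≤ 3) := hS.iterate_parent_pendant_mem hΔ (hj i) hn
  cases v with
  | hub => exact hmem ⟨0, by omega⟩ 3 le_rfl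
  | sub₁ i => exact hmem i 2 (by norm_num)
  | sub₂ i => exact hmem i 1 (by norm_num)
  | leaf i => exact hmem i 0 (by norm_num)
  | pendant i j => exact absurd rfl (hv i j)

lemma IsConnForcingSet.ncard_compl_le (hΔ : 3 ≤ Δ) (hS : IsConnForcingSet (spider Δ) S) :
    Sᶜ.ncard ≤ Δ := by
  have hpend : ∀ v ∈ Sᶜ, ∃ i j, v = pendant i j := fun v hv => by
    by_contra! h
    exact hv (hS.mem_of_forall_ne_pendant hΔ h)
  calc Sᶜ.ncard ≤ (Set.range (leaf (Δ := Δ))).ncard := by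
        refine Set.ncard_le_ncard_of_injOn parent ?_ ?_
        · intro v hv
          obtain ⟨i, j, rfl⟩ := hpend v hv
          exact ⟨i, rfl⟩
        · intro v hv w hw hvw
          obtain ⟨i, j, rfl⟩ := hpend v hv
          obtain ⟨i', j', rfl⟩ := hpend w hw
          obtain rfl : i = i' := leaf_injective hvw
          rw [hS.1.pendant_eq_of_notMem hv hw]
    _ = Δ := by rw [Set.ncard_range_of_injective leaf_injective, Nat.card_eq_fintype_card,
        Fintype.card_fin]

lemma IsConnForcingSet.le_ncard (hΔ : 3 ≤ Δ) (hS : IsConnForcingSet (spider Δ) S) :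
    (Δ + 1) ^ 2 - Δ ≤ S.ncard := by
  have := Set.ncard_add_ncard_compl S
  rw [Nat.card_eq_fintype_card, card_eq (by omega)] at this
  have := hS.ncard_compl_le hΔ
  omega

end LowerBound

section UpperBound

variable {Δ : ℕ}

def allButPendantsAt (j₀ : Fin (Δ - 1)) : Set (SpiderVtx Δ) := (Set.range fun i => pendant i j₀)ᶜ

lemma isConnForcingSet_allButPendantsAt (j₀ : Fin (Δ - 1)) :
    IsConnForcingSet (spider Δ) (allButPendantsAt j₀) := by
  refine ⟨isForcingSet_of_forall_forced fun w hw => ?_, ?_⟩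
  · obtain ⟨i, rfl⟩ := not_not.1 hw
    refine ⟨leaf i, by simp [allButPendantsAt], ?_⟩
    ext u
    cases u <;> simp [allButPendantsAt, neighborSet_leaf, eq_comm]
  · refine parentGraph_induce_connected_of_mapsTo (r := hub) ?_ (by simp [allButPendantsAt])
      fun v => ⟨4, iterate_parent_four v⟩
    intro v _
    cases v <;> simp [allButPendantsAt, parent]

lemma ncard_allButPendantsAt (j₀ : Fin (Δ - 1)) :
    (allButPendantsAt j₀).ncard = (Δ + 1) ^ 2 - Δ := by
  have hinj : Function.Injective fun i : Fin Δ => pendant i j₀ := fun _ _ h => by injection h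
  rw [allButPendantsAt, Set.ncard_compl, Set.ncard_range_of_injective hinj,
    Nat.card_eq_fintype_card, Nat.card_eq_fintype_card, card_eq (by have := j₀.isLt; omega), Fintype.card_fin]

end UpperBound

section Degree

variable {Δ : ℕ}

lemma degree_eq_ncard_neighborSet {G : SimpleGraph V} [Fintype V] [DecidableRel G.Adj] (v : V) :
    G.degree v = (G.neighborSet v).ncard := by
  rw [← card_neighborSet_eq_degree, ← Nat.card_eq_fintype_card, Nat.card_coe_set_eq]

lemma spider_degree_hub : (spider Δ).degree hub = Δ := by
  rw [degree_eq_ncard_neighborSet, neighborSet_hub, Set.ncard_range_of_injective sub₁_injective,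
    Nat.card_eq_fintype_card, Fintype.card_fin]

lemma spider_degree_le (hΔ : 2 ≤ Δ) (v : SpiderVtx Δ) : (spider Δ).degree v ≤ Δ := by
  rw [degree_eq_ncard_neighborSet]
  cases v with
  | hub => rw [← degree_eq_ncard_neighborSet, spider_degree_hub]
  | sub₁ i => rw [neighborSet_sub₁, Set.ncard_pair (by simp)]; exact hΔ
  | sub₂ i => rw [neighborSet_sub₂, Set.ncard_pair (by simp)]; exact hΔ
  | leaf i =>
    rw [neighborSet_leaf, Set.ncard_insert_of_notMem (by simp),
      Set.ncard_range_of_injective (pendant_injective i), Nat.card_eq_fintype_card,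
      Fintype.card_fin]
    omega
  | pendant i j => rw [neighborSet_pendant, Set.ncard_singleton]; omega

lemma spider_maxDegree (hΔ : 2 ≤ Δ) : (spider Δ).maxDegree = Δ :=
  le_antisymm (maxDegree_le_of_forall_degree_le _ _ (spider_degree_le hΔ))
    (spider_degree_hub.symm.trans_le (degree_le_maxDegree _ _))

end Degree

lemma connForcingNumber_spider {Δ : ℕ} (hΔ : 3 ≤ Δ) :
    connForcingNumber (spider Δ) = (Δ + 1) ^ 2 - Δ := by
  let j₀ : Fin (Δ - 1) := ⟨0, by omega⟩
  rw [connForcingNumber_eq_ncard (isConnForcingSet_allButPendantsAt j₀)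
    fun S hS => ncard_allButPendantsAt j₀ ▸ hS.le_ncard hΔ, ncard_allButPendantsAt]

/-- For every `Δ ≥ 3` there is a connected graph `G` of order `n = (Δ+1)²` with
maximum degree `Δ` and `F_c(G) = n - Δ`, i.e. `F_c(G) = (Δ/(Δ+1))·n + 1`
(expressed multiplicatively as `(Δ+1)·F_c(G) = Δ·n + (Δ+1)`). -/
theorem exists_connected_graph_large_connForcingNumber (Δ : ℕ) (hΔ : 3 ≤ Δ) :
    ∃ (W : Type) (instV : Fintype W) (G : SimpleGraph W)
      (instA : DecidableRel G.Adj),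
      G.Connected ∧ Fintype.card W = (Δ + 1) ^ 2 ∧
      @SimpleGraph.maxDegree W G instV instA = Δ ∧
      connForcingNumber G = (Δ + 1) ^ 2 - Δ ∧
      (Δ + 1) * connForcingNumber G = Δ * (Δ + 1) ^ 2 + (Δ + 1) := by
  refine ⟨SpiderVtx Δ, inferInstance, spider Δ, inferInstance, spider_connected,
    card_eq (by omega), spider_maxDegree (by omega), connForcingNumber_spider hΔ, ?_⟩
  have h : Δ ≤ (Δ + 1) ^ 2 := by nlinarith
  rw [connForcingNumber_spider hΔ]
  zify [h]
  ring
end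

section
/- If G is a connected graph, then F_c(G) ≥ b(G) + 1, where b(G) is the number of 2-connected blocks of G. -/
open SimpleGraph

variable {V : Type*}

/-- `B` is (the vertex set of) a block of `G`: a maximal nonempty set of
vertices inducing a connected subgraph with no cut vertex of its own. -/
def IsBlockSet (G : SimpleGraph V) (B : Set V) : Prop :=
  (B.Nonempty ∧ (G.induce B).Connected ∧
      ∀ v ∈ B, (G.induce (B \ {v})).Preconnected) ∧
    ∀ B' : Set V, B ⊆ B' →
      (B'.Nonempty ∧ (G.induce B').Connected ∧
        ∀ v ∈ B', (G.induce (B' \ {v})).Preconnected) → B' = B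

/-- `b(G)`: the number of 2-connected blocks of `G`, i.e. blocks with at least
3 vertices. -/
noncomputable def numTwoConnBlocks (G : SimpleGraph V) : ℕ :=
  {B : Set V | IsBlockSet G B ∧ 3 ≤ B.ncard}.ncard

/-!
A connected forcing set `S` meets every block `B` with at least three vertices twice. Otherwise
all of `S` is joined to a single vertex `c ∈ B` by walks avoiding `B \ {c}`, and the vertices
not so joined form a fort (no vertex outside it has exactly one neighbor in it), which forcing
never enters. Two blocks share at most one vertex, and a walk between two vertices of a block
has an edge inside the block, so the blocks meeting `S` twice contain distinct edges of a
spanning tree of `G[S]`, which has `|S| - 1` edges.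
-/

namespace SimpleGraph

variable {G : SimpleGraph V}

theorem Walk.IsPath.exists_walk_to_end_avoiding {u v a w : V} {p : G.Walk u v} (hp : p.IsPath)
    (ha : a ∈ p.support) (haw : a ≠ w) :
    ∃ e ∈ ({u, v} : Set V), ∃ q : G.Walk a e, (∀ x ∈ q.support, x ∈ p.support) ∧
      w ∉ q.support := by
  obtain ⟨q, r, rfl⟩ := Walk.mem_support_iff_exists_append.mp ha
  by_cases hwq : w ∈ q.support
  · exact ⟨v, Or.inr rfl, r, fun x hx => (Walk.mem_support_append_iff _ _).mpr (Or.inr hx),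
      fun hwr => hp.ne_of_mem_support_of_append haw.symm hwq hwr rfl⟩
  · exact ⟨u, Or.inl rfl, q.reverse,
      fun x hx => (Walk.mem_support_append_iff _ _).mpr (Or.inl (by simpa using hx)),
      by simpa using hwq⟩

theorem exists_walk_of_connected_induce {S : Set V} (hS : (G.induce S).Connected) {a b : V}
    (ha : a ∈ S) (hb : b ∈ S) : ∃ p : G.Walk a b, ∀ x ∈ p.support, x ∈ S := by
  obtain ⟨p⟩ := hS.preconnected ⟨a, ha⟩ ⟨b, hb⟩
  have hsupp : ∀ x ∈ (p.map (Embedding.induce S).toHom).support, x ∈ S := by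
    intro x hx
    erw [Walk.support_map] at hx
    obtain ⟨y, -, rfl⟩ := List.mem_map.mp hx
    exact y.2
  exact ⟨_, hsupp⟩

theorem exists_adj_of_preconnected_induce {S : Set V} (hS : (G.induce S).Preconnected) {a b : V}
    (ha : a ∈ S) (hb : b ∈ S) (hab : a ≠ b) : ∃ x ∈ S, G.Adj a x := by
  obtain ⟨p⟩ := hS ⟨a, ha⟩ ⟨b, hb⟩
  cases p with
  | nil => exact absurd rfl hab
  | cons h _ => exact ⟨_, Subtype.prop _, h⟩

theorem nontrivial_of_forall_mem_edge {W : Type*} {H : SimpleGraph W} {f : W → V}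
    (hf : f.Injective) {e : Sym2 W} (he : e ∈ H.edgeSet) {X : Set V} (hX : ∀ z ∈ e, f z ∈ X) :
    X.Nontrivial := by
  induction e using Sym2.ind with
  | h a b => exact ⟨f a, hX a (Sym2.mem_mk_left a b), f b, hX b (Sym2.mem_mk_right a b),
      hf.ne (H.mem_edgeSet.mp he).ne⟩

def reachableWithin (G : SimpleGraph V) (X : Set V) (c : V) : Set V :=
  {x | ∃ p : G.Walk x c, ∀ y ∈ p.support, y ∈ X}

theorem mem_of_mem_reachableWithin {X : Set V} {c x : V} (hx : x ∈ G.reachableWithin X c) :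
    x ∈ X :=
  let ⟨p, hp⟩ := hx
  hp x p.start_mem_support

theorem mem_reachableWithin_of_adj {X : Set V} {c x y : V} (hx : x ∈ G.reachableWithin X c)
    (hy : y ∈ X) (hxy : G.Adj y x) : y ∈ G.reachableWithin X c := by
  obtain ⟨p, hp⟩ := hx
  refine ⟨p.cons hxy, fun z hz => ?_⟩
  rw [Walk.support_cons, List.mem_cons] at hz
  rcases hz with rfl | hz
  exacts [hy, hp z hz]

theorem exists_subset_reachableWithin (hG : G.Connected) {S B : Set V}
    (hS : (G.induce S).Connected) (hSB : (S ∩ B).Subsingleton) (hBfin : B.Finite)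
    (hBne : B.Nonempty) : ∃ c ∈ B, S ⊆ G.reachableWithin (insert c Bᶜ) c := by
  classical
  by_cases h : (S ∩ B).Nonempty
  · obtain ⟨c, hcS, hcB⟩ := h
    refine ⟨c, hcB, fun s hs => ?_⟩
    obtain ⟨p, hp⟩ := exists_walk_of_connected_induce hS hs hcS
    refine ⟨p, fun y hy => ?_⟩
    by_cases hyB : y ∈ B
    · exact Or.inl (hSB ⟨hp y hy, hyB⟩ ⟨hcS, hcB⟩)
    · exact Or.inr hyB
  -- `c` is the first vertex of `B` on a walk from `S` to `B`.
  obtain ⟨⟨s₀, hs₀⟩⟩ := hS.nonempty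
  obtain ⟨b, hb⟩ := hBne
  obtain ⟨p⟩ := hG.preconnected s₀ b
  obtain ⟨c, hcB, hcp, hfirst⟩ :=
    p.exists_mem_support_forall_mem_support_imp_eq hBfin.toFinset ⟨b, by simp [hb]⟩
  refine ⟨c, by simpa using hcB, fun s hs => ?_⟩
  obtain ⟨q, hq⟩ := exists_walk_of_connected_induce hS hs hs₀
  refine ⟨q.append (p.takeUntil c hcp), fun y hy => ?_⟩
  by_cases hyB : y ∈ B
  · refine Or.inl ?_
    rcases (Walk.mem_support_append_iff _ _).mp hy with hy | hy
    · exact absurd ⟨y, hq y hy, hyB⟩ h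
    · exact hfirst y (by simpa using hyB) hy
  · exact Or.inr hyB

end SimpleGraph

section

variable {G : SimpleGraph V}

def IsFort (G : SimpleGraph V) (F : Set V) : Prop :=
  F.Nonempty ∧ ∀ v ∉ F, ∀ w ∈ F, G.Adj v w → ∃ w' ∈ F, w' ≠ w ∧ G.Adj v w'

theorem IsFort.disjoint_zfStep {F S : Set V} (hF : IsFort G F) (hS : Disjoint S F) :
    Disjoint (zfStep G S) F := by
  refine Set.disjoint_union_left.mpr ⟨hS, Set.disjoint_left.mpr ?_⟩
  rintro w ⟨v, hvS, hvw⟩ hwF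
  have hw : w ∈ G.neighborSet v \ S := hvw ▸ rfl
  obtain ⟨w', hw'F, hw'w, hvw'⟩ := hF.2 v (Set.disjoint_left.mp hS hvS) w hwF hw.1
  have hw' : w' ∈ G.neighborSet v \ S := ⟨hvw', Set.disjoint_right.mp hS hw'F⟩
  rw [hvw] at hw'
  exact hw'w hw'

theorem IsFort.not_isForcingSet {F S : Set V} (hF : IsFort G F) (hS : Disjoint S F) :
    ¬IsForcingSet G S := by
  rintro ⟨n, hn⟩
  have hdisj : Disjoint ((zfStep G)^[n] S) F :=
    Function.Iterate.rec (fun T => Disjoint T F) hS (fun _ => hF.disjoint_zfStep) n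
  obtain ⟨x, hx⟩ := hF.1
  exact Set.disjoint_left.mp hdisj (hn ▸ Set.mem_univ x) hx

namespace IsBlockSet

variable {B : Set V}

theorem connected (hB : IsBlockSet G B) : (G.induce B).Connected := hB.1.2.1

theorem preconnected_induce_diff_singleton (hB : IsBlockSet G B) (w : V) :
    (G.induce (B \ {w})).Preconnected := by
  by_cases hw : w ∈ B
  · exact hB.1.2.2 w hw
  · rw [Set.sdiff_singleton_eq_self hw]
    exact hB.connected.preconnected

theorem eq_of_nontrivial_inter {B' : Set V} (hB : IsBlockSet G B) (hB' : IsBlockSet G B')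
    (h : (B ∩ B').Nontrivial) : B = B' := by
  obtain ⟨c, hc⟩ := h.nonempty
  have hcut : (B ∪ B').Nonempty ∧ (G.induce (B ∪ B')).Connected ∧
      ∀ w ∈ B ∪ B', (G.induce ((B ∪ B') \ {w})).Preconnected := by
    refine ⟨⟨c, Or.inl hc.1⟩, induce_union_connected hB.connected.preconnected
      hB'.connected.preconnected ⟨c, hc⟩, fun w _ => ?_⟩
    obtain ⟨c', ⟨hc'B, hc'B'⟩, hc'w⟩ := h.exists_ne w
    rw [Set.union_sdiff_distrib]
    exact (induce_union_connected (hB.preconnected_induce_diff_singleton w)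
      (hB'.preconnected_induce_diff_singleton w) ⟨c', ⟨hc'B, hc'w⟩, ⟨hc'B', hc'w⟩⟩).preconnected
  rw [← hB.2 _ Set.subset_union_left hcut, hB'.2 _ Set.subset_union_right hcut]

-- Adding a path between two distinct vertices of `B` creates no cut vertex, so by maximality
-- of `B` the path was already inside `B`.
theorem support_subset_of_isPath (hB : IsBlockSet G B) {u v : V} (hu : u ∈ B) (hv : v ∈ B)
    (huv : u ≠ v) {p : G.Walk u v} (hp : p.IsPath) : ∀ x ∈ p.support, x ∈ B := by
  set P : Set V := {x | x ∈ p.support}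
  have hcut : (B ∪ P).Nonempty ∧ (G.induce (B ∪ P)).Connected ∧
      ∀ w ∈ B ∪ P, (G.induce ((B ∪ P) \ {w})).Preconnected := by
    refine ⟨⟨u, Or.inl hu⟩, induce_union_connected hB.connected.preconnected
      p.connected_induce_support.preconnected ⟨u, hu, p.start_mem_support⟩, fun w _ => ?_⟩
    obtain ⟨c, hcB, hcw⟩ : ∃ c ∈ B, c ≠ w := by
      by_cases huw : u = w
      · exact ⟨v, hv, huw ▸ huv.symm⟩
      · exact ⟨u, hu, huw⟩
    have hBw := hB.preconnected_induce_diff_singleton w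
    refine (induce_connected_of_patches (s := (B ∪ P) \ {w}) c ⟨Or.inl hcB, hcw⟩
      fun {a} ha => ?_).preconnected
    obtain ⟨haB | haP, haw⟩ := ha
    · exact ⟨B \ {w}, Set.sdiff_subset_sdiff_left Set.subset_union_left, ⟨hcB, hcw⟩, ⟨haB, haw⟩,
        hBw _ _⟩
    obtain ⟨e, he, q, hqp, hwq⟩ := hp.exists_walk_to_end_avoiding haP haw
    have heB : e ∈ B \ {w} := by
      refine ⟨?_, fun hew => hwq (hew ▸ q.end_mem_support)⟩
      rcases he with rfl | rfl <;> assumption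
    refine ⟨(B \ {w}) ∪ {x | x ∈ q.support}, ?_, Or.inl ⟨hcB, hcw⟩, Or.inr q.start_mem_support,
      (induce_union_connected hBw q.connected_induce_support.preconnected
        ⟨e, heB, q.end_mem_support⟩).preconnected _ _⟩
    rintro x (⟨hxB, hxw⟩ | hxq)
    · exact ⟨Or.inl hxB, hxw⟩
    · exact ⟨Or.inr (hqp x hxq), fun hxw => hwq (hxw ▸ hxq)⟩
  intro x hx
  rw [← hB.2 _ Set.subset_union_left hcut]
  exact Or.inr hx

theorem exists_mem_darts (hB : IsBlockSet G B) {u v : V} (p : G.Walk u v) (hu : u ∈ B)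
    (hv : v ∈ B) (huv : u ≠ v) : ∃ d ∈ p.darts, d.fst ∈ B ∧ d.snd ∈ B := by
  classical
  have hsub := hB.support_subset_of_isPath hu hv huv p.bypass_isPath
  obtain ⟨d, hd⟩ :=
    List.exists_mem_of_ne_nil _ (Walk.darts_eq_nil.not.mpr (Walk.not_nil_of_ne huv))
  exact ⟨d, p.darts_bypass_subset_darts hd,
    hsub _ (p.bypass.dart_fst_mem_support_of_mem_darts hd),
    hsub _ (p.bypass.dart_snd_mem_support_of_mem_darts hd)⟩

theorem exists_adj_mem_ne (hB : IsBlockSet G B) (hB3 : 3 ≤ B.ncard) {v : V} (hv : v ∈ B)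
    (w : V) : ∃ x ∈ B, x ≠ w ∧ G.Adj v x := by
  obtain ⟨u, huB, hu⟩ := Set.exists_mem_notMem_of_ncard_lt_ncard
    (s := {v, w}) (t := B) ((Set.ncard_insert_le v {w}).trans_lt (by simp; omega))
  simp only [Set.mem_insert_iff, Set.mem_singleton_iff, not_or] at hu
  by_cases hvw : v = w
  · obtain ⟨x, hxB, hvx⟩ := exists_adj_of_preconnected_induce hB.connected.preconnected hv huB
      (Ne.symm hu.1)
    exact ⟨x, hxB, hvw ▸ hvx.ne.symm, hvx⟩
  · obtain ⟨x, ⟨hxB, hxw⟩, hvx⟩ := exists_adj_of_preconnected_induce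
      (hB.preconnected_induce_diff_singleton w) ⟨hv, hvw⟩ ⟨huB, hu.2⟩ (Ne.symm hu.1)
    exact ⟨x, hxB, hxw, hvx⟩

theorem isFort_compl_reachableWithin (hB : IsBlockSet G B) (hB3 : 3 ≤ B.ncard) {c : V}
    (hc : c ∈ B) : IsFort G (G.reachableWithin (insert c Bᶜ) c)ᶜ := by
  have hBR : ∀ x ∈ B, x ≠ c → x ∉ G.reachableWithin (insert c Bᶜ) c :=
    fun x hxB hxc hxR => (mem_of_mem_reachableWithin hxR).elim hxc (· hxB)
  refine ⟨?_, fun v hv w hw hvw => ?_⟩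
  · obtain ⟨x, hxB, hxc, -⟩ := hB.exists_adj_mem_ne hB3 hc c
    exact ⟨x, hBR x hxB hxc⟩
  rw [Set.notMem_compl_iff] at hv
  by_cases hvc : v = c
  · subst hvc
    obtain ⟨x, hxB, hxw, hvx⟩ := hB.exists_adj_mem_ne hB3 hc w
    exact ⟨x, hBR x hxB hvx.ne.symm, hxw, hvx⟩
  -- Otherwise `v ∉ B` and `w ∈ B \ {c}`, and the walk `w, v, …, c` would force `v` into `B`.
  exfalso
  have hwX : w ∉ insert c Bᶜ := fun hwX => hw (mem_reachableWithin_of_adj hv hwX hvw.symm)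
  simp only [Set.mem_insert_iff, Set.mem_compl_iff, not_or, not_not] at hwX
  obtain ⟨p, hp⟩ := hv
  have hvB : v ∉ B := (hp v p.start_mem_support).resolve_left hvc
  classical
  have hpath : (p.bypass.cons hvw.symm).IsPath := p.bypass_isPath.cons fun hw' =>
    (hp w (p.support_bypass_subset_support hw')).elim hwX.1 (· hwX.2)
  exact hvB (hB.support_subset_of_isPath hwX.2 hc hwX.1 hpath v (by simp))

end IsBlockSet

theorem IsConnForcingSet.nontrivial_inter (hG : G.Connected) {S B : Set V}
    (hS : IsConnForcingSet G S) (hB : IsBlockSet G B) (hB3 : 3 ≤ B.ncard) :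
    (S ∩ B).Nontrivial := by
  by_contra h
  obtain ⟨c, hcB, hSR⟩ := exists_subset_reachableWithin hG hS.2 (Set.not_nontrivial_iff.mp h)
    (Set.finite_of_ncard_pos (by omega)) hB.1.1
  exact (hB.isFort_compl_reachableWithin hB3 hcB).not_isForcingSet
    (Set.disjoint_compl_right_iff_subset.mpr hSR) hS.1

theorem ncard_setOf_isBlockSet_nontrivial_inter_add_one_le {S : Set V}
    (hS : (G.induce S).Connected) (hSfin : S.Finite) :
    {B | IsBlockSet G B ∧ (S ∩ B).Nontrivial}.ncard + 1 ≤ S.ncard := by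
  have := hSfin.to_subtype
  obtain ⟨T, hTS, hT⟩ := hS.exists_isTree_le
  let φ : T →g G := (Embedding.induce S).toHom.comp (Hom.ofLE hTS)
  have hedge : ∀ B ∈ {B | IsBlockSet G B ∧ (S ∩ B).Nontrivial},
      ∃ e ∈ T.edgeSet, ∀ z ∈ e, (z : V) ∈ B := by
    rintro B ⟨hB, x, ⟨hxS, hxB⟩, y, ⟨hyS, hyB⟩, hxy⟩
    obtain ⟨r⟩ := hT.connected.preconnected ⟨x, hxS⟩ ⟨y, hyS⟩
    obtain ⟨d, hd, hdB⟩ := hB.exists_mem_darts (r.map φ) hxB hyB hxy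
    rw [Walk.darts_map, List.mem_map] at hd
    obtain ⟨d', -, rfl⟩ := hd
    refine ⟨d'.edge, d'.edge_mem, fun z hz => ?_⟩
    rcases Sym2.mem_iff.mp hz with rfl | rfl
    exacts [hdB.1, hdB.2]
  have : Nonempty (Sym2 S) := let ⟨s⟩ := hS.nonempty; ⟨s(s, s)⟩
  choose! f hfT hfB using hedge
  have hinj : Set.InjOn f {B | IsBlockSet G B ∧ (S ∩ B).Nontrivial} :=
    fun B hB B' hB' hBB' => hB.1.eq_of_nontrivial_inter hB'.1 <|
      nontrivial_of_forall_mem_edge Subtype.val_injective (hfT B hB) fun z hz =>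
        ⟨hfB B hB z hz, hfB B' hB' z (hBB' ▸ hz)⟩
  calc {B | IsBlockSet G B ∧ (S ∩ B).Nontrivial}.ncard + 1
      ≤ T.edgeSet.ncard + 1 := by
        gcongr
        exact Set.ncard_le_ncard_of_injOn f hfT hinj
    _ = S.ncard := (isTree_iff_connected_and_card.mp hT).2

theorem SimpleGraph.Connected.isConnForcingSet_univ (hG : G.Connected) :
    IsConnForcingSet G Set.univ :=
  ⟨⟨0, rfl⟩, G.induceUnivIso.connected_iff.mpr hG⟩

end

/-- If `G` is a connected graph, then `F_c(G) ≥ b(G) + 1`. -/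
theorem connForcingNumber_ge_blocks {V : Type*} [Fintype V]
    (G : SimpleGraph V) (hG : G.Connected) :
    numTwoConnBlocks G + 1 ≤ connForcingNumber G := by
  refine le_csInf ⟨_, Set.univ, hG.isConnForcingSet_univ, rfl⟩ ?_
  rintro _ ⟨S, hS, rfl⟩
  have hblocks : {B | IsBlockSet G B ∧ 3 ≤ B.ncard} ⊆
      {B | IsBlockSet G B ∧ (S ∩ B).Nontrivial} :=
    fun B ⟨hB, hB3⟩ => ⟨hB, hS.nontrivial_inter hG hB hB3⟩
  calc numTwoConnBlocks G + 1
      ≤ {B | IsBlockSet G B ∧ (S ∩ B).Nontrivial}.ncard + 1 := by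
        gcongr
        exact Set.ncard_le_ncard hblocks
    _ ≤ S.ncard := ncard_setOf_isBlockSet_nontrivial_inter_add_one_le hS.2 S.toFinite
end

section
/- For all integers k ≥ 1 and Δ ≥ 3, the graph G obtained from a tree T of order k with maximum degree less than Δ by attaching Δ − d_T(v) pendant leaves to each vertex v of T satisfies γ_c(G) = k and F_c(G) = k(Δ − 2) + 2. -/
open SimpleGraph

variable {V : Type*}

/-- A connected dominating set: every vertex outside `D` has a neighbor in `D`,
and `D` induces a connected subgraph. -/
def IsConnDomSet (G : SimpleGraph V) (D : Set V) : Prop :=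
  (∀ v ∉ D, ∃ u ∈ D, G.Adj u v) ∧ (G.induce D).Connected

/-- The connected domination number `γ_c(G)`. -/
noncomputable def connDomNumber (G : SimpleGraph V) : ℕ :=
  sInf (Set.ncard '' {D : Set V | IsConnDomSet G D})

/-- The graph obtained from `T` by attaching `Δ - deg_T v` pendant leaves to
each vertex `v` of `T`. -/
def attachLeaves {W : Type*} [Fintype W] (T : SimpleGraph W)
    [DecidableRel T.Adj] (Δ : ℕ) :
    SimpleGraph (W ⊕ (Σ v : W, Fin (Δ - T.degree v))) where
  Adj a b :=
    match a, b with
    | Sum.inl u, Sum.inl v => T.Adj u v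
    | Sum.inl u, Sum.inr p => u = p.1
    | Sum.inr p, Sum.inl v => p.1 = v
    | Sum.inr _, Sum.inr _ => False
  symm := by
    constructor
    rintro (u | p) (v | q) h
    · exact T.adj_symm h
    · exact h.symm
    · exact h.symm
    · exact h
  loopless := by
    constructor
    rintro (u | p) h
    · exact T.ne_of_adj h rfl
    · exact h

/-!
In `attachLeaves T Δ` every added leaf is pendant and every tree vertex has degree `Δ ≥ 3`.
Hence a connected dominating or connected forcing set that contains a leaf also contains its
base vertex: a lone leaf can neither dominate the other neighbours of its base nor force past it.
So a connected dominating set contains all `k` tree vertices, and the tree vertices suffice.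

For forcing, two uncoloured leaves at the same vertex are never forced. So a tree vertex missing
from a connected forcing set `S` has all its leaves missing too, hence exactly one leaf, hence
degree `Δ - 1 ≥ 2` in `T`. The tree vertices of `S` form a connected set in `T`, and in a tree
the missing vertex farthest from this set would separate it. Hence `S` contains every tree vertex
and misses at most one leaf per vertex, giving `|S| ≥ |V| - k = k(Δ - 2) + 2`. Leaving out one
leaf per vertex attains this bound: each base vertex forces its missing leaf in one step.
-/

open Set

section Forcing

variable {G : SimpleGraph V} {S C : Set V} {x y : V}

lemma zfStep_mono : Monotone (zfStep G) := by
  intro S S' hSS' w hw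
  rcases hw with hw | ⟨v, hv, hN⟩
  · exact Or.inl (hSS' hw)
  by_cases hw' : w ∈ S'
  · exact Or.inl hw'
  have hwN : w ∈ G.neighborSet v \ S := hN ▸ rfl
  refine Or.inr ⟨v, hSS' hv, eq_singleton_iff_unique_mem.mpr ⟨⟨hwN.1, hw'⟩, ?_⟩⟩
  exact fun z hz => eq_of_mem_singleton (hN ▸ sdiff_subset_sdiff_right hSS' hz)

lemma zfStep_subset_iff : zfStep G C ⊆ C ↔ ∀ v ∈ C, ∀ w, G.neighborSet v \ C ≠ {w} := by
  constructor
  · intro hC v hv w hN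
    have hwN : w ∈ G.neighborSet v \ C := hN ▸ rfl
    exact hwN.2 (hC (Or.inr ⟨v, hv, hN⟩))
  · rintro hC w (hw | ⟨v, hv, hN⟩)
    exacts [hw, (hC v hv w hN).elim]

lemma IsForcingSet.eq_univ_of_zfStep_subset (hS : IsForcingSet G S) (hSC : S ⊆ C)
    (hC : zfStep G C ⊆ C) : C = univ := by
  obtain ⟨n, hn⟩ := hS
  have hiter : ∀ m, (zfStep G)^[m] S ⊆ C := by
    intro m
    induction m with
    | zero => exact hSC
    | succ m ih => rw [Function.iterate_succ_apply']; exact (zfStep_mono ih).trans hC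
  exact univ_subset_iff.mp (hn ▸ hiter n)

lemma not_isForcingSet_of_neighborSet_eq (hxy : x ≠ y)
    (hN : G.neighborSet x = G.neighborSet y) (hx : x ∉ S) (hy : y ∉ S) :
    ¬ IsForcingSet G S := by
  intro hS
  have hC : zfStep G {x, y}ᶜ ⊆ {x, y}ᶜ := by
    refine zfStep_subset_iff.mpr fun v _ w hvw => ?_
    have hwN : w ∈ G.neighborSet v \ {x, y}ᶜ := hvw ▸ rfl
    have hvxy : v ∈ G.neighborSet x ∧ v ∈ G.neighborSet y := by
      rcases not_notMem.mp hwN.2 with rfl | rfl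
      exacts [⟨hwN.1.symm, hN ▸ hwN.1.symm⟩, ⟨hN ▸ hwN.1.symm, hwN.1.symm⟩]
    have hx' : x ∈ G.neighborSet v \ {x, y}ᶜ := ⟨hvxy.1.symm, by simp⟩
    have hy' : y ∈ G.neighborSet v \ {x, y}ᶜ := ⟨hvxy.2.symm, by simp⟩
    rw [hvw] at hx' hy'
    exact hxy (hx'.trans hy'.symm)
  have := hS.eq_univ_of_zfStep_subset (fun z hz => by rintro (rfl | rfl) <;> contradiction) hC
  exact (this ▸ mem_univ x : x ∈ ({x, y}ᶜ : Set V)) (by simp)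

lemma not_isForcingSet_singleton_of_neighborSet_eq (hx : G.neighborSet x = {y})
    (hy : (G.neighborSet y \ {x}).Nontrivial) : ¬ IsForcingSet G {x} := by
  intro hS
  have hC : zfStep G {x, y} ⊆ {x, y} := by
    refine zfStep_subset_iff.mpr fun v hv w => ?_
    rcases hv with hv | hv <;> subst v
    · rw [hx, sdiff_eq_empty.mpr (by simp)]
      exact (singleton_ne_empty w).symm
    · rw [insert_eq, ← sdiff_sdiff, sdiff_singleton_eq_self fun h => G.irrefl h.1]
      exact hy.ne_singleton
  obtain ⟨z, ⟨hyz, hzx⟩, -⟩ := hy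
  have hzy : z ≠ y := (G.ne_of_adj hyz).symm
  have hz := hS.eq_univ_of_zfStep_subset (by simp) hC ▸ mem_univ z
  rcases hz with rfl | rfl
  exacts [hzx rfl, hzy rfl]

end Forcing

namespace SimpleGraph

variable {G : SimpleGraph V} {S : Set V} {x y : V}

lemma eq_of_adj_of_neighborSet_eq_singleton (hx : G.neighborSet x = {y}) {u : V}
    (hxu : G.Adj x u) : u = y := by
  rwa [← mem_neighborSet, hx, mem_singleton_iff] at hxu

lemma mem_of_induce_preconnected_of_neighborSet_eq_singleton (hS : (G.induce S).Preconnected)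
    (hS' : S.Nontrivial) (hx : G.neighborSet x = {y}) (hxS : x ∈ S) : y ∈ S := by
  have : Nontrivial S := nontrivial_coe_sort.mpr hS'
  obtain ⟨u, hu⟩ := hS.exists_adj_of_nontrivial ⟨x, hxS⟩
  exact eq_of_adj_of_neighborSet_eq_singleton hx hu ▸ u.2

end SimpleGraph

section Connected

variable {G : SimpleGraph V} {S D : Set V} {x y : V}

lemma IsConnForcingSet.mem_of_neighborSet_eq_singleton (hS : IsConnForcingSet G S)
    (hx : G.neighborSet x = {y}) (hy : (G.neighborSet y \ {x}).Nontrivial) (hxS : x ∈ S) :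
    y ∈ S := by
  by_contra hyS
  have hS' : S.Subsingleton := not_nontrivial_iff.mp fun hS' =>
    hyS (mem_of_induce_preconnected_of_neighborSet_eq_singleton hS.2.preconnected hS' hx hxS)
  exact not_isForcingSet_singleton_of_neighborSet_eq hx hy (hS'.eq_singleton_of_mem hxS ▸ hS.1)

lemma IsConnDomSet.mem_of_neighborSet_eq_singleton (hD : IsConnDomSet G D)
    (hx : G.neighborSet x = {y}) (hy : (G.neighborSet y \ {x}).Nonempty) : y ∈ D := by
  by_contra hyD
  have hxD : x ∈ D := by
    by_contra hxD
    obtain ⟨u, hu, hux⟩ := hD.1 x hxD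
    exact hyD (eq_of_adj_of_neighborSet_eq_singleton hx hux.symm ▸ hu)
  obtain ⟨z, hyz, hzx⟩ := hy
  have hD' : D.Nontrivial := by
    by_contra hD'
    have hDx : D = {x} := (not_nontrivial_iff.mp hD').eq_singleton_of_mem hxD
    obtain ⟨u, hu, huz⟩ := hD.1 z (hDx ▸ hzx)
    rw [hDx, mem_singleton_iff] at hu
    subst u
    exact G.ne_of_adj hyz (eq_of_adj_of_neighborSet_eq_singleton hx huz).symm
  exact hyD (mem_of_induce_preconnected_of_neighborSet_eq_singleton hD.2.preconnected hD' hx hxD)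

end Connected

namespace SimpleGraph

variable {W : Type*} {T : SimpleGraph W} {A : Set W}

/-- In a tree, a vertex outside a connected set `A` has at most one neighbour in `A`. -/
lemma IsAcyclic.eq_penultimate_of_induce_preconnected (hT : T.IsAcyclic)
    (hA : (T.induce A).Preconnected) {a u v : W} (ha : a ∈ A) (hu : u ∈ A) (hv : v ∉ A)
    (huv : T.Adj v u) {P : T.Walk a v} (hP : P.IsPath) : u = P.penultimate := by
  classical
  obtain ⟨R⟩ := hA ⟨a, ha⟩ ⟨u, hu⟩
  set Q := (R.map (Embedding.induce A).toHom).bypass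
  have hvQ : v ∉ Q.support := fun hvQ => by
    obtain ⟨w, -, hw⟩ :=
      List.mem_map.mp (Walk.support_map _ R ▸ Walk.support_bypass_subset_support _ hvQ)
    exact hv (hw ▸ w.2)
  exact hT.eq_penultimate_of_adj_end hP huv
    (hT.mem_support_of_ne_mem_support_of_adj_of_isPath hP (Walk.bypass_isPath _) huv hvQ)

lemma IsTree.eq_univ_of_induce_connected [Finite W] (hT : T.IsTree)
    (hA : (T.induce A).Connected) (hdeg : ∀ v ∉ A, (T.neighborSet v).Nontrivial) :
    A = univ := by
  by_contra hAne
  obtain ⟨⟨a, ha⟩⟩ := hA.nonempty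
  obtain ⟨v, hv, hfar⟩ :=
    exists_max_image Aᶜ (T.dist a) (toFinite _) (nonempty_compl.mpr hAne)
  obtain ⟨P, hP, hPlen⟩ := hT.connected.exists_path_of_dist a v
  obtain ⟨u, (hvu : T.Adj v u), hu⟩ := (hdeg v hv).exists_ne P.penultimate
  have huA : u ∉ A := fun huA =>
    hu (hT.isAcyclic.eq_penultimate_of_induce_preconnected hA.preconnected ha huA hv hvu hP)
  have huP : u ∉ P.support := fun huP => hu (hT.isAcyclic.eq_penultimate_of_adj_end hP hvu huP)
  obtain ⟨R, hR, hRlen⟩ := hT.connected.exists_path_of_dist a u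
  have hRP : R = P.concat hvu :=
    congrArg Subtype.val <|
      hT.isAcyclic.subsingleton_path a u |>.elim ⟨R, hR⟩ ⟨_, hP.concat huP hvu⟩
  have := hfar u huA
  rw [← hPlen, ← hRlen, hRP, Walk.length_concat] at this
  omega

end SimpleGraph

section AttachLeaves

variable {W : Type*} [Fintype W] {T : SimpleGraph W} [DecidableRel T.Adj] {Δ : ℕ}

lemma attachLeaves_neighborSet_inr (p : Σ v, Fin (Δ - T.degree v)) :
    (attachLeaves T Δ).neighborSet (.inr p) = {.inl p.1} := by
  ext (v | q)
  · exact ⟨fun h => congrArg Sum.inl (Eq.symm h), fun h => (Sum.inl_injective h).symm⟩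
  · exact ⟨False.elim, fun h => Sum.inr_ne_inl h |>.elim⟩

lemma attachLeaves_neighborSet_inl (v : W) :
    (attachLeaves T Δ).neighborSet (.inl v) =
      Sum.inl '' T.neighborSet v ∪ range fun i => .inr ⟨v, i⟩ := by
  ext (u | q)
  · simp [attachLeaves]
  · rcases q with ⟨w, i⟩
    simp only [attachLeaves, mem_neighborSet, mem_union, mem_image, mem_range, reduceCtorEq,
      and_false, exists_false, Sum.inr.injEq, Sigma.mk.injEq, false_or]
    exact ⟨by rintro rfl; exact ⟨i, rfl, .rfl⟩, fun ⟨_, h, _⟩ => h⟩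

lemma attachLeaves_ncard_neighborSet_inl {v : W} (hv : T.degree v ≤ Δ) :
    ((attachLeaves T Δ).neighborSet (.inl v)).ncard = Δ := by
  rw [attachLeaves_neighborSet_inl, ncard_union_eq, ncard_image_of_injective _ Sum.inl_injective,
    ncard_range_of_injective, ← Nat.card_coe_set_eq, Nat.card_eq_fintype_card,
    card_neighborSet_eq_degree, Nat.card_eq_fintype_card, Fintype.card_fin]
  · omega
  · intro i j h; simpa using h
  · exact disjoint_left.mpr fun _ ⟨_, _, hu⟩ ⟨_, hi⟩ => Sum.inr_ne_inl (hi.trans hu.symm)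

lemma attachLeaves_neighborSet_inl_diff_nontrivial (hΔ : 3 ≤ Δ) {v : W} (hv : T.degree v ≤ Δ)
    (x : W ⊕ Σ v, Fin (Δ - T.degree v)) :
    ((attachLeaves T Δ).neighborSet (.inl v) \ {x}).Nontrivial := by
  rw [← one_lt_ncard_iff_nontrivial]
  have := pred_ncard_le_ncard_sdiff_singleton ((attachLeaves T Δ).neighborSet (.inl v)) x
  rw [attachLeaves_ncard_neighborSet_inl hv] at this
  omega

lemma attachLeaves_induce_connected (hT : T.Connected)
    {S : Set (W ⊕ Σ v, Fin (Δ - T.degree v))} (hS : ∀ v, .inl v ∈ S) :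
    ((attachLeaves T Δ).induce S).Connected := by
  have : Nonempty W := hT.nonempty
  let φ : T →g (attachLeaves T Δ).induce S := ⟨fun v => ⟨.inl v, hS v⟩, fun h => h⟩
  have hbase : ∀ x : S,
      ((attachLeaves T Δ).induce S).Reachable x (φ (Sum.elim id Sigma.fst x.1)) := by
    rintro ⟨v | p, hx⟩
    · rfl
    · exact Adj.reachable (rfl : p.1 = p.1)
  refine (connected_iff_exists_forall_reachable _).mpr ⟨φ (Classical.arbitrary W), fun x => ?_⟩
  exact ((hT.preconnected _ _).map φ).trans (hbase x).symm

-- Collapsing each leaf onto its base vertex maps walks in `S` to walks in its tree part.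
lemma induce_connected_of_attachLeaves {S : Set (W ⊕ Σ v, Fin (Δ - T.degree v))}
    (hS : ((attachLeaves T Δ).induce S).Connected)
    (hleaf : ∀ p, .inr p ∈ S → .inl p.1 ∈ S) : (T.induce {v | .inl v ∈ S}).Connected := by
  let f : S → {v | .inl v ∈ S} := fun x =>
    ⟨Sum.elim id Sigma.fst x.1, by rcases x with ⟨v | p, hx⟩; exacts [hx, hleaf p hx]⟩
  have hf : ((attachLeaves T Δ).induce S).Adj ≤
      Function.onFun (Relation.ReflTransGen (T.induce _).Adj) f := by
    rintro ⟨u | p, hu⟩ ⟨v | q, hv⟩ h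
    · exact .single h
    · obtain rfl : u = q.1 := h
      exact .refl
    · obtain rfl : p.1 = v := h
      exact .refl
    · exact h.elim
  have : Nonempty S := hS.nonempty
  refine @Connected.mk _ _ (fun u v => ?_) ⟨f (Classical.arbitrary S)⟩
  rw [reachable_iff_reflTransGen]
  exact Relation.ReflTransGen.lift' f hf _ _
    ((reachable_iff_reflTransGen _ _).mp (hS.preconnected ⟨.inl u, u.2⟩ ⟨.inl v, v.2⟩))

lemma attachLeaves_card (hT : T.IsTree) (hΔ : ∀ v, T.degree v ≤ Δ) :
    Nat.card (W ⊕ Σ v, Fin (Δ - T.degree v)) + Fintype.card W = Fintype.card W * Δ + 2 := by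
  have hdeg : ∑ v, T.degree v + 2 = 2 * Fintype.card W := by
    rw [sum_degrees_eq_twice_card_edges, ← hT.card_edgeFinset]
    ring
  have hleaves : ∑ v, (Δ - T.degree v) + ∑ v, T.degree v = Fintype.card W * Δ := by
    rw [← Finset.sum_add_distrib]
    simp [Nat.sub_add_cancel (hΔ _)]
  rw [Nat.card_eq_fintype_card, Fintype.card_sum, Fintype.card_sigma]
  simp only [Fintype.card_fin]
  omega

lemma isConnDomSet_attachLeaves_range_inl (hT : T.Connected) :
    IsConnDomSet (attachLeaves T Δ) (range .inl) := by
  refine ⟨?_, attachLeaves_induce_connected hT fun v => ⟨v, rfl⟩⟩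
  rintro (v | p) hx
  exacts [(hx ⟨v, rfl⟩).elim, ⟨.inl p.1, ⟨p.1, rfl⟩, rfl⟩]

lemma IsConnDomSet.attachLeaves_range_inl_subset (hΔ : 3 ≤ Δ) (hmax : ∀ v, T.degree v < Δ)
    {D : Set (W ⊕ Σ v, Fin (Δ - T.degree v))} (hD : IsConnDomSet (attachLeaves T Δ) D) :
    range .inl ⊆ D := by
  rintro _ ⟨v, rfl⟩
  exact hD.mem_of_neighborSet_eq_singleton
    (attachLeaves_neighborSet_inr ⟨v, ⟨0, Nat.sub_pos_of_lt (hmax v)⟩⟩)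
    (attachLeaves_neighborSet_inl_diff_nontrivial hΔ (hmax v).le _).nonempty

lemma isLeast_ncard_isConnDomSet_attachLeaves (hT : T.Connected) (hΔ : 3 ≤ Δ)
    (hmax : ∀ v, T.degree v < Δ) :
    IsLeast (ncard '' {D | IsConnDomSet (attachLeaves T Δ) D}) (Fintype.card W) := by
  have hcard : (range (.inl : W → W ⊕ Σ v, Fin (Δ - T.degree v))).ncard = Fintype.card W := by
    rw [ncard_range_of_injective Sum.inl_injective, Nat.card_eq_fintype_card]
  refine ⟨⟨_, isConnDomSet_attachLeaves_range_inl hT, hcard⟩, ?_⟩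
  rintro _ ⟨D, hD, rfl⟩
  exact hcard ▸ ncard_le_ncard (hD.attachLeaves_range_inl_subset hΔ hmax)

lemma IsForcingSet.attachLeaves_eq_of_notMem {S : Set (W ⊕ Σ v, Fin (Δ - T.degree v))}
    (hS : IsForcingSet (attachLeaves T Δ) S) {p q : Σ v, Fin (Δ - T.degree v)} (hpq : p.1 = q.1)
    (hp : .inr p ∉ S) (hq : .inr q ∉ S) : p = q := by
  by_contra hne
  refine not_isForcingSet_of_neighborSet_eq (fun h => hne (Sum.inr_injective h)) ?_ hp hq hS
  rw [attachLeaves_neighborSet_inr, attachLeaves_neighborSet_inr, hpq]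

lemma IsConnForcingSet.attachLeaves_range_inl_subset (hT : T.IsTree) (hΔ : 3 ≤ Δ)
    (hmax : ∀ v, T.degree v < Δ) {S : Set (W ⊕ Σ v, Fin (Δ - T.degree v))}
    (hS : IsConnForcingSet (attachLeaves T Δ) S) : range .inl ⊆ S := by
  have hleaf : ∀ p, .inr p ∈ S → .inl p.1 ∈ S := fun p =>
    hS.mem_of_neighborSet_eq_singleton (attachLeaves_neighborSet_inr p)
      (attachLeaves_neighborSet_inl_diff_nontrivial hΔ (hmax p.1).le _)
  have hA := hT.eq_univ_of_induce_connected (induce_connected_of_attachLeaves hS.2 hleaf)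
    fun v hv => ?_
  · rintro _ ⟨v, rfl⟩
    exact (hA ▸ mem_univ v : v ∈ {v | .inl v ∈ S})
  -- all leaves at `v` lie outside `S`, so there is only one and `v` has degree `Δ - 1 ≥ 2`
  have hone : Δ - T.degree v ≤ 1 := by
    by_contra h
    have := hS.1.attachLeaves_eq_of_notMem
      (p := ⟨v, ⟨0, by omega⟩⟩) (q := ⟨v, ⟨1, by omega⟩⟩) rfl
      (fun h => hv (hleaf _ h)) (fun h => hv (hleaf _ h))
    simp at this
  rw [← one_lt_ncard_iff_nontrivial, ← Nat.card_coe_set_eq, Nat.card_eq_fintype_card,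
    card_neighborSet_eq_degree]
  omega

lemma IsConnForcingSet.attachLeaves_ncard_compl_le (hT : T.IsTree) (hΔ : 3 ≤ Δ)
    (hmax : ∀ v, T.degree v < Δ) {S : Set (W ⊕ Σ v, Fin (Δ - T.degree v))}
    (hS : IsConnForcingSet (attachLeaves T Δ) S) : Sᶜ.ncard ≤ Fintype.card W := by
  have hsub := hS.attachLeaves_range_inl_subset hT hΔ hmax
  have hleaf : ∀ x ∈ Sᶜ, ∃ p, x = .inr p := by
    rintro (v | p) hx
    exacts [(hx (hsub ⟨v, rfl⟩)).elim, ⟨p, rfl⟩]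
  have hinj : InjOn (Sum.elim id Sigma.fst) Sᶜ := by
    intro x hx y hy h
    obtain ⟨p, rfl⟩ := hleaf x hx
    obtain ⟨q, rfl⟩ := hleaf y hy
    exact congrArg _ (hS.1.attachLeaves_eq_of_notMem h hx hy)
  rw [← hinj.ncard_image, ← Nat.card_eq_fintype_card]
  exact ncard_le_card _

lemma isConnForcingSet_attachLeaves_compl_range (hT : T.Connected)
    (ℓ : ∀ v, Fin (Δ - T.degree v)) :
    IsConnForcingSet (attachLeaves T Δ) (range fun v => .inr ⟨v, ℓ v⟩)ᶜ := by
  refine ⟨⟨1, ?_⟩, attachLeaves_induce_connected hT fun v ⟨w, hw⟩ => Sum.inr_ne_inl hw⟩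
  rw [Function.iterate_one, eq_univ_iff_forall]
  intro x
  by_cases hx : x ∈ (range fun v => .inr ⟨v, ℓ v⟩)ᶜ
  · exact Or.inl hx
  obtain ⟨v, rfl⟩ := not_notMem.mp hx
  refine Or.inr ⟨.inl v, fun ⟨w, hw⟩ => Sum.inr_ne_inl hw, ?_⟩
  ext z
  simp only [mem_sdiff, mem_compl_iff, not_not, mem_neighborSet, mem_singleton_iff]
  constructor
  · rintro ⟨hvz, w, rfl⟩
    obtain rfl : v = w := hvz
    rfl
  · rintro rfl
    exact ⟨rfl, v, rfl⟩

lemma isLeast_ncard_isConnForcingSet_attachLeaves (hT : T.IsTree) (hΔ : 3 ≤ Δ)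
    (hmax : ∀ v, T.degree v < Δ) :
    IsLeast (ncard '' {S | IsConnForcingSet (attachLeaves T Δ) S})
      (Fintype.card W * (Δ - 2) + 2) := by
  have hV := attachLeaves_card hT fun v => (hmax v).le
  have hΔ2 : Fintype.card W * (Δ - 2) + 2 * Fintype.card W = Fintype.card W * Δ := by
    rw [mul_comm 2, ← mul_add, Nat.sub_add_cancel (by omega)]
  let ℓ : ∀ v, Fin (Δ - T.degree v) := fun v => ⟨0, Nat.sub_pos_of_lt (hmax v)⟩
  refine ⟨⟨_, isConnForcingSet_attachLeaves_compl_range hT.connected ℓ, ?_⟩, ?_⟩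
  · have := ncard_add_ncard_compl
      (range fun v => (.inr ⟨v, ℓ v⟩ : W ⊕ Σ v, Fin (Δ - T.degree v)))
    rw [ncard_range_of_injective fun v w h => congrArg Sigma.fst (Sum.inr_injective h),
      Nat.card_eq_fintype_card] at this
    omega
  · rintro _ ⟨S, hS, rfl⟩
    have := ncard_add_ncard_compl S
    have := hS.attachLeaves_ncard_compl_le hT hΔ hmax
    omega

end AttachLeaves

theorem connDomNumber_and_connForcingNumber_attachLeaves_general
    {W : Type*} [Fintype W] (T : SimpleGraph W) [DecidableRel T.Adj]
    (k Δ : ℕ) (hΔ : 3 ≤ Δ) (hT : T.IsTree)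
    (hcard : Fintype.card W = k) (hmax : T.maxDegree < Δ) :
    connDomNumber (attachLeaves T Δ) = k ∧
      connForcingNumber (attachLeaves T Δ) = k * (Δ - 2) + 2 := by
  have hdeg : ∀ v, T.degree v < Δ := fun v => (T.degree_le_maxDegree v).trans_lt hmax
  subst hcard
  exact ⟨(isLeast_ncard_isConnDomSet_attachLeaves hT.connected hΔ hdeg).csInf_eq,
    (isLeast_ncard_isConnForcingSet_attachLeaves hT hΔ hdeg).csInf_eq⟩

/-- For all integers `k ≥ 1` and `Δ ≥ 3`, the graph obtained from a tree `T` of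
order `k` with maximum degree `< Δ` by attaching `Δ - deg_T v` pendant leaves to
each vertex `v` satisfies `γ_c = k` and `F_c = k(Δ-2) + 2`. -/
theorem connDomNumber_and_connForcingNumber_attachLeaves
    {W : Type*} [Fintype W] (T : SimpleGraph W) [DecidableRel T.Adj]
    (k Δ : ℕ) (hk : 1 ≤ k) (hΔ : 3 ≤ Δ) (hT : T.IsTree)
    (hcard : Fintype.card W = k) (hmax : T.maxDegree < Δ) :
    connDomNumber (attachLeaves T Δ) = k ∧
      connForcingNumber (attachLeaves T Δ) = k * (Δ - 2) + 2 :=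
  connDomNumber_and_connForcingNumber_attachLeaves_general T k Δ hΔ hT hcard hmax
end
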